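/- In a balanced parenthesis string s, for every opening parenthesis at position j that is not the outermost one, there is a unique position i < j with s[i] = '(' such that the substring s[i+1..j-1] is balanced and the prefix depth at i is exactly one less than the prefix depth at j; this defines the parent of node j. -/

import Mathlib

/-- Strings over the alphabet {(, )} are modeled as lists of booleans,
where `true` stands for '(' and `false` for ')'. -/
inductive BalancedParen : List Bool → Prop
  | nil : BalancedParen []
  | wrap {s : List Bool} : BalancedParen s → BalancedParen (true :: (s ++ [false]))
  | append {s t : List Bool} : BalancedParen s → BalancedParen t → BalancedParen (s ++ t)

/-- The prefix depth at position `j`: number of '(' minus number of ')' in `s[0..j]`. -/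
def depth (s : List Bool) (j : ℕ) : ℤ :=
  ((s.take (j + 1)).count true : ℤ) - ((s.take (j + 1)).count false : ℤ)

open List DyckStep

def Dk (s : List Bool) (k : ℕ) : ℤ :=
  ((s.take k).count true : ℤ) - ((s.take k).count false : ℤ)

lemma Dk_succ (s : List Bool) (k : ℕ) (hk : k < s.length) :
    Dk s (k+1) = Dk s k + (if s.get ⟨k, hk⟩ then 1 else -1) := by
  have h := List.take_concat_get (l := s) (i := k) hk
  rw [List.concat_eq_append] at h
  unfold Dk
  rw [← h, List.count_append, List.count_append]
  simp only [List.get_eq_getElem]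
  rcases Bool.dichotomy s[k] with h' | h' <;> simp [h'] <;> ring

lemma Dk_add (s : List Bool) (a m : ℕ) :
    Dk s (a + m) = Dk s a + Dk (s.drop a) m := by
  unfold Dk
  rw [List.take_add, List.count_append, List.count_append]
  push_cast; ring

/-- Balanced → counts. -/
lemma bp_counts {t : List Bool} (h : BalancedParen t) :
    t.count true = t.count false ∧ ∀ k, (t.take k).count false ≤ (t.take k).count true := by
  induction h with
  | nil => simp
  | @wrap s h ih =>
    obtain ⟨h1, h2⟩ := ih
    constructor
    · simp [List.count_append, h1]
    · intro k
      match k with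
      | 0 => simp
      | k + 1 =>
        rw [List.take_succ_cons, List.take_append]
        simp only [List.count_cons, List.count_append]
        have hd : List.take (k - s.length) [false] = [] ∨
            List.take (k - s.length) [false] = [false] := by
          rcases h' : k - s.length with _ | n <;> simp
        have c2 := h2 k
        rcases hd with hd | hd <;> rw [hd] <;> simp <;> omega
  | append h1 h2 ih1 ih2 =>
    obtain ⟨a1, a2⟩ := ih1
    obtain ⟨b1, b2⟩ := ih2
    constructor
    · simp [List.count_append, a1, b1]
    · intro k
      rw [List.take_append]
      simp only [List.count_append]
      exact Nat.add_le_add (a2 k) (b2 _)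

def bm : Bool → DyckStep := fun b => match b with | true => U | false => D
def mb : DyckStep → Bool := fun s => match s with | U => true | D => false

lemma bm_inj : Function.Injective bm := by intro a b h; cases a <;> cases b <;> simp_all [bm]

lemma map_mb_bm (l : List Bool) : (l.map bm).map mb = l := by
  rw [List.map_map]
  have : mb ∘ bm = id := by funext b; cases b <;> rfl
  simp [this]

lemma toList_add (p q : DyckWord) : (p + q).toList = p.toList ++ q.toList := rfl
lemma toList_nest (p : DyckWord) : p.nest.toList = [U] ++ p.toList ++ [D] := rfl
lemma toList_zero : (0 : DyckWord).toList = [] := rfl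

lemma bp_map (p : DyckWord) : BalancedParen (p.toList.map mb) := by
  suffices H : ∀ n (p : DyckWord), p.semilength = n → BalancedParen (p.toList.map mb) from
    H _ p rfl
  intro n
  induction n using Nat.strong_induction_on with
  | _ n ih =>
    intro p hn
    by_cases hp : p = 0
    · subst hp
      simpa [toList_zero] using BalancedParen.nil
    · have hd := DyckWord.nest_insidePart_add_outsidePart hp
      have l1 := DyckWord.semilength_insidePart_lt hp
      have l2 := DyckWord.semilength_outsidePart_lt hp
      rw [← hd, toList_add, toList_nest, List.map_append, List.map_append, List.map_append]
      have e1 : ([U] : List DyckStep).map mb = [true] := rfl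
      have e2 : ([D] : List DyckStep).map mb = [false] := rfl
      rw [e1, e2]
      exact BalancedParen.append
        (BalancedParen.wrap (ih _ (hn ▸ l1) _ rfl))
        (ih _ (hn ▸ l2) _ rfl)

lemma bp_of_counts {t : List Bool} (h1 : t.count true = t.count false)
    (h2 : ∀ k, (t.take k).count false ≤ (t.take k).count true) : BalancedParen t := by
  have hcu : ∀ (l : List Bool), (l.map bm).count U = l.count true := fun l =>
    List.count_map_of_injective l bm bm_inj true
  have hcd : ∀ (l : List Bool), (l.map bm).count D = l.count false := fun l =>
    List.count_map_of_injective l bm bm_inj false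
  let p : DyckWord :=
    ⟨t.map bm, by rw [hcu, hcd, h1], fun i => by
      rw [← List.map_take, hcu, hcd]; exact h2 i⟩
  have := bp_map p
  rwa [show p.toList = t.map bm from rfl, map_mb_bm] at this

theorem stmt_14 (s : List Bool) (hs : BalancedParen s) (j : ℕ) (hj : j < s.length)
    (hopen : s.get ⟨j, hj⟩ = true)
    (hnotroot : 2 ≤ depth s j) :
    ∃! i : ℕ, i < j ∧ ∃ hi : i < s.length, s.get ⟨i, hi⟩ = true ∧
      BalancedParen ((s.drop (i + 1)).take (j - (i + 1))) ∧
      depth s i + 1 = depth s j := by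
  have hdep : ∀ k : ℕ, depth s k = Dk s (k + 1) := fun _ => rfl
  rw [hdep] at hnotroot
  have hDj : Dk s j + 1 = Dk s (j + 1) := by
    have h := Dk_succ s j hj
    rw [hopen] at h; rw [h]; simp
  have hD0 : Dk s 0 = 0 := by simp [Dk]
  classical
  have hP0 : Dk s (0:ℕ) ≤ Dk s (j+1) - 2 := by omega
  obtain ⟨i0, hi0⟩ : ∃ i0, i0 = Nat.findGreatest (fun i => Dk s i ≤ Dk s (j+1) - 2) j :=
    ⟨_, rfl⟩
  have hPi : Dk s i0 ≤ Dk s (j+1) - 2 := by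
    rw [hi0]; exact Nat.findGreatest_spec (P := fun i => Dk s i ≤ Dk s (j+1) - 2) (Nat.zero_le j) hP0
  have hile : i0 ≤ j := hi0 ▸ Nat.findGreatest_le j
  have hgt : ∀ k, i0 < k → k ≤ j → Dk s (j+1) - 1 ≤ Dk s k := by
    intro k h1 h2
    have h3 : ¬ (Dk s k ≤ Dk s (j+1) - 2) :=
      Nat.findGreatest_is_greatest (P := fun i => Dk s i ≤ Dk s (j+1) - 2) (hi0 ▸ h1) h2
    omega
  have hij : i0 < j := by
    rcases Nat.lt_or_ge i0 j with h | h
    · exact h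
    · exfalso
      have : i0 = j := le_antisymm hile h
      rw [this] at hPi; omega
  have hi0len : i0 < s.length := lt_trans hij hj
  have hstep := Dk_succ s i0 hi0len
  have hDi1 : Dk s (j+1) - 1 ≤ Dk s (i0 + 1) := hgt (i0 + 1) (Nat.lt_succ_self _) hij
  have hget0 : s.get ⟨i0, hi0len⟩ = true := by
    rcases Bool.dichotomy (s.get ⟨i0, hi0len⟩) with h | h
    · exfalso; rw [h] at hstep; simp only [Bool.false_eq_true, if_false] at hstep; omega
    · exact h
  rw [hget0] at hstep; simp only [if_true] at hstep
  have hDa : Dk s (i0 + 1) = Dk s (j+1) - 1 := by omega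
  have haj : i0 + 1 ≤ j := hij
  refine ⟨i0, ⟨hij, hi0len, hget0, ?_, ?_⟩, ?_⟩
  · -- middle is balanced
    apply bp_of_counts
    · have h1 : Dk s ((i0+1) + (j - (i0+1))) = Dk s (i0+1) + Dk (s.drop (i0+1)) (j - (i0+1)) :=
        Dk_add s (i0+1) (j - (i0+1))
      rw [Nat.add_sub_cancel' haj] at h1
      have h2 : Dk (s.drop (i0+1)) (j - (i0+1)) = 0 := by omega
      simp only [Dk] at h2
      omega
    · intro k
      rw [List.take_take]
      have hmle : min k (j - (i0+1)) ≤ j - (i0+1) := min_le_right _ _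
      have h1 : Dk s ((i0+1) + min k (j - (i0+1)))
          = Dk s (i0+1) + Dk (s.drop (i0+1)) (min k (j - (i0+1))) := Dk_add s _ _
      have h2 : Dk s (j+1) - 1 ≤ Dk s ((i0+1) + min k (j - (i0+1))) :=
        hgt _ (by omega) (by omega)
      have h3 : (0:ℤ) ≤ Dk (s.drop (i0+1)) (min k (j - (i0+1))) := by omega
      simp only [Dk] at h3
      omega
  · rw [hdep, hdep]; omega
  · -- uniqueness
    rintro i' ⟨hi'j, hi'len, hget', hbal', hdep'⟩
    rw [hdep, hdep] at hdep'
    have hstep' := Dk_succ s i' hi'len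
    rw [hget'] at hstep'; simp only [if_true] at hstep'
    have hD'0 : Dk s i' ≤ Dk s (j+1) - 2 := by omega
    have hle1 : i' ≤ i0 := hi0 ▸ Nat.le_findGreatest (P := fun i => Dk s i ≤ Dk s (j+1) - 2) (le_of_lt hi'j) hD'0
    have hle2 : i0 ≤ i' := by
      by_contra hc
      push_neg at hc
      have hpre := (bp_counts hbal').2 (i0 - (i'+1))
      rw [List.take_take] at hpre
      have hmin : min (i0 - (i'+1)) (j - (i'+1)) = i0 - (i'+1) := by omega
      rw [hmin] at hpre
      have h1 : Dk s ((i'+1) + (i0 - (i'+1)))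
          = Dk s (i'+1) + Dk (s.drop (i'+1)) (i0 - (i'+1)) := Dk_add s _ _
      have h2 : (i'+1) + (i0 - (i'+1)) = i0 := by omega
      rw [h2] at h1
      have h3 : (0:ℤ) ≤ Dk (s.drop (i'+1)) (i0 - (i'+1)) := by
        simp only [Dk]; omega
      omega
    omega
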